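/- arXiv:2604.06774 — 4 statements merged into one kernel-verified Lean document; each statement's English description precedes it below -/
import Mathlib

section
/- Let D ∈ ℝ^{n×d} have ℓ₂-normalized columns, and let μ(D) = max_{i≠j} |D_i^⊤ D_j| be its mutual coherence. Then for every vector x ∈ ℝ^d with at most s nonzero entries, (1 - (s-1)μ(D))‖x‖₂² ≤ ‖Dx‖₂² ≤ (1 + (s-1)μ(D))‖x‖₂². -/
open Finset
open scoped Classical

/-- Mutual-coherence restricted isometry bounds for `s`-sparse vectors:
if `D` has ℓ₂-normalized columns and all off-diagonal column inner products are
bounded (in absolute value) by the mutual coherence `μ`, then for every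
`s`-sparse `x`, `(1-(s-1)μ)‖x‖₂² ≤ ‖Dx‖₂² ≤ (1+(s-1)μ)‖x‖₂²`. -/
theorem stmt0 {n d : ℕ} (D : Matrix (Fin n) (Fin d) ℝ)
    (hnorm : ∀ j : Fin d, ∑ i, (D i j) ^ 2 = 1)
    (μ : ℝ) (hμ0 : 0 ≤ μ)
    (hμ : ∀ i j : Fin d, i ≠ j → |∑ t, D t i * D t j| ≤ μ)
    (s : ℕ) (x : Fin d → ℝ)
    (hx : (Finset.univ.filter fun i => x i ≠ 0).card ≤ s) :
    (1 - ((s : ℝ) - 1) * μ) * ∑ i, (x i) ^ 2 ≤ ∑ t, (∑ i, D t i * x i) ^ 2 ∧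
    ∑ t, (∑ i, D t i * x i) ^ 2 ≤ (1 + ((s : ℝ) - 1) * μ) * ∑ i, (x i) ^ 2 := by
  classical
  set S := Finset.univ.filter fun i : Fin d => x i ≠ 0 with hS
  set N := ∑ i, (x i) ^ 2 with hN
  set A := ∑ i ∈ S, |x i| with hA
  -- expand the energy
  have hE2 : ∑ t, (∑ i, D t i * x i) ^ 2
      = ∑ i, ∑ j, (x i * x j) * (∑ t, D t i * D t j) := by
    have h0 : ∀ t : Fin n, (∑ i, D t i * x i) ^ 2
        = ∑ i, ∑ j, (x i * x j) * (D t i * D t j) := by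
      intro t
      rw [sq, Finset.sum_mul_sum]
      refine Finset.sum_congr rfl fun i _ => Finset.sum_congr rfl fun j _ => by ring
    simp_rw [h0]
    rw [Finset.sum_comm]
    refine Finset.sum_congr rfl fun i _ => ?_
    rw [Finset.sum_comm]
    exact Finset.sum_congr rfl fun j _ => (Finset.mul_sum _ _ _).symm
  -- split off diagonal
  have hdiag : ∑ i, ∑ j, (x i * x j) * (∑ t, D t i * D t j)
      = N + ∑ i, ∑ j ∈ Finset.univ.erase i, (x i * x j) * (∑ t, D t i * D t j) := by
    rw [hN, ← Finset.sum_add_distrib]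
    refine Finset.sum_congr rfl fun i _ => ?_
    rw [← Finset.add_sum_erase _ _ (Finset.mem_univ i)]
    congr 1
    have h1 : ∑ t, D t i * D t i = 1 := by
      simpa [sq] using hnorm i
    rw [h1]; ring
  set C := ∑ i, ∑ j ∈ Finset.univ.erase i, (x i * x j) * (∑ t, D t i * D t j) with hC
  -- bound |C|
  have hCb : |C| ≤ μ * (A ^ 2 - ∑ i ∈ S, (x i) ^ 2) := by
    have hCS : C = ∑ i ∈ S, ∑ j ∈ S.erase i, (x i * x j) * (∑ t, D t i * D t j) := by
      rw [hC]
      rw [← Finset.sum_subset (Finset.subset_univ S)]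
      · refine Finset.sum_congr rfl fun i hi => ?_
        rw [← Finset.sum_subset (Finset.erase_subset_erase _ (Finset.subset_univ S))]
        intro j hj hjS
        rcases Finset.mem_erase.mp hj with ⟨hne, _⟩
        have : x j = 0 := by
          by_contra h
          exact hjS (Finset.mem_erase.mpr ⟨hne, Finset.mem_filter.mpr ⟨Finset.mem_univ j, h⟩⟩)
        simp [this]
      · intro i _ hiS
        have : x i = 0 := by
          by_contra h
          exact hiS (Finset.mem_filter.mpr ⟨Finset.mem_univ i, h⟩)
        simp [this]
    rw [hCS]
    calc |∑ i ∈ S, ∑ j ∈ S.erase i, (x i * x j) * (∑ t, D t i * D t j)|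
        ≤ ∑ i ∈ S, ∑ j ∈ S.erase i, |x i| * |x j| * μ := by
          refine (Finset.abs_sum_le_sum_abs _ _).trans (Finset.sum_le_sum fun i _ => ?_)
          refine (Finset.abs_sum_le_sum_abs _ _).trans (Finset.sum_le_sum fun j hj => ?_)
          rw [abs_mul, abs_mul]
          exact mul_le_mul_of_nonneg_left (hμ i j (Finset.mem_erase.mp hj).1.symm)
            (by positivity)
      _ = ∑ i ∈ S, |x i| * (A - |x i|) * μ := by
          refine Finset.sum_congr rfl fun i hi => ?_
          rw [← Finset.sum_mul, ← Finset.mul_sum, Finset.sum_erase_eq_sub hi, ← hA]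
      _ = μ * (A ^ 2 - ∑ i ∈ S, (x i) ^ 2) := by
          have h1 : ∀ i : Fin d, |x i| * (A - |x i|) * μ
              = μ * (|x i| * A) - μ * (x i) ^ 2 := by
            intro i; rw [← sq_abs (x i)]; ring
          rw [Finset.sum_congr rfl fun i _ => h1 i, Finset.sum_sub_distrib,
            ← Finset.mul_sum, ← Finset.mul_sum, ← Finset.sum_mul, ← hA, ← mul_sub]
          ring_nf
  -- Cauchy-Schwarz on the support
  have hSsum : ∑ i ∈ S, (x i) ^ 2 = N := by
    rw [hN]
    refine Finset.sum_subset (Finset.subset_univ S) fun i _ hiS => ?_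
    have : x i = 0 := by
      by_contra h
      exact hiS (Finset.mem_filter.mpr ⟨Finset.mem_univ i, h⟩)
    simp [this]
  have hNnn : 0 ≤ N := Finset.sum_nonneg fun i _ => sq_nonneg _
  have hA2 : A ^ 2 ≤ (s : ℝ) * N := by
    have h1 : A ^ 2 ≤ (S.card : ℝ) * ∑ i ∈ S, (x i) ^ 2 := by
      have := sq_sum_le_card_mul_sum_sq (s := S) (f := fun i => |x i|)
      simp_rw [sq_abs] at this
      exact_mod_cast this
    rw [hSsum] at h1
    refine h1.trans (mul_le_mul_of_nonneg_right ?_ hNnn)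
    exact_mod_cast hx
  have hCb2 : |C| ≤ ((s : ℝ) - 1) * μ * N := by
    refine hCb.trans ?_
    rw [hSsum]
    nlinarith [mul_le_mul_of_nonneg_left hA2 hμ0]
  rw [hE2, hdiag]
  rcases abs_le.mp hCb2 with ⟨h1, h2⟩
  constructor <;> nlinarith
end

section
/- Under the one-sided universal discretization assumption C₁‖g‖_{L_p(Ω,ν)}^p ≤ (1/m)∑_{j=1}^m |g(ξ_j)|^p for all g ∈ Σ_{2s}(𝒟_N), the best empirical s-term estimator f^s_{p,m} satisfies, for every f ∈ C(Ω), ‖f - f^s_{p,m}‖_{L_p(Ω,ν)} ≤ C_p · σ_s(f, 𝒟_N)_{L_∞(Ω)}, with C_p = 2^{1/p}(1 + 2(1+C₁^{-1})^{1/p}) + 2^{1/p} C₁^{-1/p}(2 + 2(1+C₁^{-1})^{1/p}). -/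
open Finset MeasureTheory
open scoped Classical ENNReal BigOperators

open scoped NNReal

lemma aux_two_rpow {p : ℝ} (hp : 1 ≤ p) (a b : ℝ) :
    |a + b| ^ p ≤ 2 ^ (p - 1) * (|a| ^ p + |b| ^ p) := by
  have hp0 : (0:ℝ) ≤ p := le_trans zero_le_one hp
  have h1 : |a + b| ^ p ≤ (|a| + |b|) ^ p :=
    Real.rpow_le_rpow (abs_nonneg _) (abs_add_le a b) hp0
  refine h1.trans ?_
  lift |a| to ℝ≥0 using abs_nonneg a with x
  lift |b| to ℝ≥0 using abs_nonneg b with y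
  have := NNReal.rpow_add_le_mul_rpow_add_rpow x y hp
  exact_mod_cast this

lemma aux_rpow_add {p : ℝ} (hp : 1 ≤ p) {a b : ℝ} (ha : 0 ≤ a) (hb : 0 ≤ b) :
    a ^ p + b ^ p ≤ (a + b) ^ p := by
  lift a to ℝ≥0 using ha
  lift b to ℝ≥0 using hb
  exact_mod_cast NNReal.add_rpow_le_rpow_add a b hp

/-- Under the one-sided universal discretization assumption for `2s`-sparse dictionary
combinations, the best empirical `s`-term estimator `f^s_{p,m} = ∑ᵢ wᵢ uᵢ` satisfies
`‖f - f^s_{p,m}‖_{L_p(ν)} ≤ C_p σ_s(f, 𝒟_N)_{L_∞}` with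
`C_p = 2^{1/p}(1 + 2(1+C₁⁻¹)^{1/p}) + 2^{1/p} C₁^{-1/p}(2 + 2(1+C₁⁻¹)^{1/p})`. -/
theorem stmt7 {Ω : Type*} [TopologicalSpace Ω] [CompactSpace Ω]
    [MeasurableSpace Ω] [BorelSpace Ω]
    (ν : Measure Ω) [IsProbabilityMeasure ν]
    (N m s : ℕ) (hs : 2 * s ≤ N) (hm : 0 < m)
    (u : Fin N → C(Ω, ℝ)) (ξ : Fin m → Ω)
    (p : ℝ) (hp : 1 ≤ p) (C₁ : ℝ) (hC₁ : 0 < C₁)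
    (hdisc : ∀ v : Fin N → ℝ, (Finset.univ.filter fun i => v i ≠ 0).card ≤ 2 * s →
      ENNReal.ofReal C₁ * ∫⁻ x, ENNReal.ofReal (|(∑ i, v i • u i) x| ^ p) ∂ν ≤
        ENNReal.ofReal ((1 / m : ℝ) * ∑ j, |(∑ i, v i • u i) (ξ j)| ^ p))
    (f : C(Ω, ℝ)) (w : Fin N → ℝ)
    (hw : (Finset.univ.filter fun i => w i ≠ 0).card ≤ s)
    (hmin : ∀ v : Fin N → ℝ, (Finset.univ.filter fun i => v i ≠ 0).card ≤ s →
      (1 / m : ℝ) * ∑ j, |f (ξ j) - ∑ i, w i * (u i) (ξ j)| ^ p ≤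
        (1 / m : ℝ) * ∑ j, |f (ξ j) - ∑ i, v i * (u i) (ξ j)| ^ p) :
    ∫⁻ x, ENNReal.ofReal (|f x - (∑ i, w i • u i) x| ^ p) ∂ν ≤
      ENNReal.ofReal
        ((((2 : ℝ) ^ (1 / p) * (1 + 2 * (1 + C₁⁻¹) ^ (1 / p)) +
            (2 : ℝ) ^ (1 / p) * C₁ ^ (-(1 / p)) * (2 + 2 * (1 + C₁⁻¹) ^ (1 / p))) *
          sInf {r : ℝ | ∃ v : Fin N → ℝ,
            (Finset.univ.filter fun i => v i ≠ 0).card ≤ s ∧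
              ‖f - ∑ i, v i • u i‖ ≤ r}) ^ p) := by
  have hp0 : (0:ℝ) < p := lt_of_lt_of_le zero_lt_one hp
  set g : C(Ω, ℝ) := ∑ i, w i • u i with hg
  set S : Set ℝ := {r : ℝ | ∃ v : Fin N → ℝ,
      (Finset.univ.filter fun i => v i ≠ 0).card ≤ s ∧ ‖f - ∑ i, v i • u i‖ ≤ r} with hSdef
  set σ : ℝ := sInf S with hσdef
  have hSne : S.Nonempty := by
    refine ⟨‖f - ∑ i, (fun _ : Fin N => (0:ℝ)) i • u i‖, (fun _ => 0), ?_, le_rfl⟩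
    simp
  have hσ0 : 0 ≤ σ := by
    apply le_csInf hSne
    rintro r ⟨v, -, hr⟩
    exact le_trans (norm_nonneg _) hr
  -- the constant
  set B : ℝ := C₁ ^ (-(1 / p)) with hBdef
  have hB0 : 0 ≤ B := Real.rpow_nonneg hC₁.le _
  set K : ℝ := 2 ^ (p - 1) * (1 + 2 ^ p * C₁⁻¹) with hKdef
  have hK0 : 0 ≤ K := by positivity
  -- Key estimate for every ε > 0
  have key : ∀ ε : ℝ, 0 < ε →
      ∫⁻ x, ENNReal.ofReal (|f x - g x| ^ p) ∂ν ≤ ENNReal.ofReal (K * (σ + ε) ^ p) := by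
    intro ε hε
    obtain ⟨r, hrS, hrlt⟩ := exists_lt_of_csInf_lt hSne (lt_add_of_pos_right σ hε)
    obtain ⟨v, hv_sp, hv_norm⟩ := hrS
    set h : C(Ω, ℝ) := ∑ i, v i • u i with hh
    have hσε : ‖f - h‖ ≤ σ + ε := le_of_lt (lt_of_le_of_lt hv_norm hrlt)
    have hsup : ∀ x, |f x - h x| ≤ σ + ε := by
      intro x
      have h1 : ‖(f - h) x‖ ≤ ‖f - h‖ := ContinuousMap.norm_coe_le_norm (f - h) x
      simpa [Real.norm_eq_abs] using h1.trans hσε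
    have hσεp : 0 ≤ σ + ε := le_trans hσ0 (by linarith)
    -- pointwise evaluation lemmas
    have hgval : ∀ x, g x = ∑ i, w i * (u i) x := by
      intro x; simp [hg, ContinuousMap.sum_apply, smul_eq_mul]
    have hhval : ∀ x, h x = ∑ i, v i * (u i) x := by
      intro x; simp [hh, ContinuousMap.sum_apply, smul_eq_mul]
    -- continuity/measurability
    have hmeas1 : Measurable fun x => ENNReal.ofReal (|f x - h x| ^ p) := by
      apply ENNReal.measurable_ofReal.comp
      exact (((f.continuous.sub h.continuous).abs).rpow_const
        (fun x => Or.inr hp0.le)).measurable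
    -- Integral bound for f - h
    have I1 : ∫⁻ x, ENNReal.ofReal (|f x - h x| ^ p) ∂ν ≤ ENNReal.ofReal ((σ + ε) ^ p) := by
      calc ∫⁻ x, ENNReal.ofReal (|f x - h x| ^ p) ∂ν
          ≤ ∫⁻ _, ENNReal.ofReal ((σ + ε) ^ p) ∂ν := by
            apply lintegral_mono
            intro x
            exact ENNReal.ofReal_le_ofReal (Real.rpow_le_rpow (abs_nonneg _) (hsup x) hp0.le)
        _ = ENNReal.ofReal ((σ + ε) ^ p) := by simp
    -- empirical bound for f - h
    have hemph : (1 / m : ℝ) * ∑ j, |f (ξ j) - h (ξ j)| ^ p ≤ (σ + ε) ^ p := by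
      have hsum : ∑ j : Fin m, |f (ξ j) - h (ξ j)| ^ p ≤ (m : ℝ) * (σ + ε) ^ p := by
        calc ∑ j : Fin m, |f (ξ j) - h (ξ j)| ^ p
            ≤ ∑ _j : Fin m, (σ + ε) ^ p := by
              apply Finset.sum_le_sum
              intro j _
              exact Real.rpow_le_rpow (abs_nonneg _) (hsup (ξ j)) hp0.le
          _ = (m : ℝ) * (σ + ε) ^ p := by simp [mul_comm]
      have hm' : (0:ℝ) < m := by exact_mod_cast hm
      have heq : (1 / m : ℝ) * ((m : ℝ) * (σ + ε) ^ p) = (σ + ε) ^ p := by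
        field_simp
      calc (1 / m : ℝ) * ∑ j, |f (ξ j) - h (ξ j)| ^ p
          ≤ (1 / m : ℝ) * ((m : ℝ) * (σ + ε) ^ p) :=
            mul_le_mul_of_nonneg_left hsum (by positivity)
        _ = (σ + ε) ^ p := heq
    -- empirical bound for f - g via minimality
    have hempf : (1 / m : ℝ) * ∑ j, |f (ξ j) - g (ξ j)| ^ p ≤ (σ + ε) ^ p := by
      have h1 := hmin v hv_sp
      simp_rw [← hgval, ← hhval] at h1
      exact h1.trans hemph
    -- empirical bound for h - g
    have hemphg : (1 / m : ℝ) * ∑ j, |h (ξ j) - g (ξ j)| ^ p ≤ 2 ^ p * (σ + ε) ^ p := by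
      have hm' : (0:ℝ) < m := by exact_mod_cast hm
      have hpt : ∀ j : Fin m, |h (ξ j) - g (ξ j)| ^ p ≤
          2 ^ (p - 1) * (|h (ξ j) - f (ξ j)| ^ p + |f (ξ j) - g (ξ j)| ^ p) := by
        intro j
        have := aux_two_rpow hp (h (ξ j) - f (ξ j)) (f (ξ j) - g (ξ j))
        simpa using this
      have habs : ∀ j : Fin m, |h (ξ j) - f (ξ j)| = |f (ξ j) - h (ξ j)| := fun j => abs_sub_comm _ _
      have hsum : (1 / m : ℝ) * ∑ j, |h (ξ j) - g (ξ j)| ^ p ≤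
          2 ^ (p - 1) * ((1 / m : ℝ) * ∑ j, |f (ξ j) - h (ξ j)| ^ p
            + (1 / m : ℝ) * ∑ j, |f (ξ j) - g (ξ j)| ^ p) := by
        have hstep : ∑ j, |h (ξ j) - g (ξ j)| ^ p ≤
            ∑ j, 2 ^ (p - 1) * (|f (ξ j) - h (ξ j)| ^ p + |f (ξ j) - g (ξ j)| ^ p) := by
          apply Finset.sum_le_sum
          intro j _
          have h0 := hpt j
          rwa [habs j] at h0
        calc (1 / m : ℝ) * ∑ j, |h (ξ j) - g (ξ j)| ^ p
            ≤ (1 / m : ℝ) *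
                ∑ j, 2 ^ (p - 1) * (|f (ξ j) - h (ξ j)| ^ p + |f (ξ j) - g (ξ j)| ^ p) :=
              mul_le_mul_of_nonneg_left hstep (by positivity)
          _ = 2 ^ (p - 1) * ((1 / m : ℝ) * ∑ j, |f (ξ j) - h (ξ j)| ^ p
              + (1 / m : ℝ) * ∑ j, |f (ξ j) - g (ξ j)| ^ p) := by
              simp only [mul_add, Finset.sum_add_distrib, ← Finset.mul_sum]
              ring
      refine hsum.trans ?_
      have h2' : (2:ℝ) ^ (p - 1) * 2 = 2 ^ p := by
        rw [Real.rpow_sub (by norm_num : (0:ℝ) < 2), Real.rpow_one]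
        field_simp
      have h2 : (2:ℝ) ^ (p - 1) * ((σ + ε) ^ p + (σ + ε) ^ p) = 2 ^ p * (σ + ε) ^ p := by
        rw [← h2']
        ring
      calc 2 ^ (p - 1) * ((1 / m : ℝ) * ∑ j, |f (ξ j) - h (ξ j)| ^ p
            + (1 / m : ℝ) * ∑ j, |f (ξ j) - g (ξ j)| ^ p)
          ≤ 2 ^ (p - 1) * ((σ + ε) ^ p + (σ + ε) ^ p) := by
            apply mul_le_mul_of_nonneg_left (add_le_add hemph hempf) (by positivity)
        _ = 2 ^ p * (σ + ε) ^ p := h2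
    -- discretization bound for h - g
    have I2 : ∫⁻ x, ENNReal.ofReal (|h x - g x| ^ p) ∂ν ≤
        ENNReal.ofReal (C₁⁻¹ * (2 ^ p * (σ + ε) ^ p)) := by
      have hsp : (Finset.univ.filter fun i => (v - w) i ≠ 0).card ≤ 2 * s := by
        have hsub : (Finset.univ.filter fun i => (v - w) i ≠ 0) ⊆
            (Finset.univ.filter fun i => v i ≠ 0) ∪ (Finset.univ.filter fun i => w i ≠ 0) := by
          intro i hi
          simp only [Finset.mem_filter, Finset.mem_union, Finset.mem_univ, true_and,
            Pi.sub_apply] at hi ⊢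
          by_contra hc
          push_neg at hc
          exact hi (by rw [hc.1, hc.2, sub_zero])
        calc (Finset.univ.filter fun i => (v - w) i ≠ 0).card
            ≤ ((Finset.univ.filter fun i => v i ≠ 0) ∪
                (Finset.univ.filter fun i => w i ≠ 0)).card := Finset.card_le_card hsub
          _ ≤ (Finset.univ.filter fun i => v i ≠ 0).card
              + (Finset.univ.filter fun i => w i ≠ 0).card := Finset.card_union_le _ _
          _ ≤ s + s := add_le_add hv_sp hw
          _ = 2 * s := by ring
      have hd := hdisc (v - w) hsp
      have hvw : (∑ i, (v - w) i • u i) = h - g := by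
        simp only [Pi.sub_apply, sub_smul, Finset.sum_sub_distrib, hh, hg]
      rw [hvw] at hd
      have hd' : ENNReal.ofReal C₁ * ∫⁻ x, ENNReal.ofReal (|h x - g x| ^ p) ∂ν ≤
          ENNReal.ofReal ((1 / m : ℝ) * ∑ j, |h (ξ j) - g (ξ j)| ^ p) := by
        simpa [ContinuousMap.sub_apply] using hd
      have hd'' : ENNReal.ofReal C₁ * ∫⁻ x, ENNReal.ofReal (|h x - g x| ^ p) ∂ν ≤
          ENNReal.ofReal C₁ * ENNReal.ofReal (C₁⁻¹ * (2 ^ p * (σ + ε) ^ p)) := by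
        refine hd'.trans ?_
        rw [← ENNReal.ofReal_mul hC₁.le]
        apply ENNReal.ofReal_le_ofReal
        rw [← mul_assoc, mul_inv_cancel₀ hC₁.ne', one_mul]
        exact hemphg
      exact (ENNReal.mul_le_mul_iff_right (ENNReal.ofReal_pos.mpr hC₁).ne' ENNReal.ofReal_ne_top).mp hd''
    -- main splitting
    calc ∫⁻ x, ENNReal.ofReal (|f x - g x| ^ p) ∂ν
        ≤ ∫⁻ x, ENNReal.ofReal (2 ^ (p - 1) * (|f x - h x| ^ p + |h x - g x| ^ p)) ∂ν := by
          apply lintegral_mono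
          intro x
          apply ENNReal.ofReal_le_ofReal
          have := aux_two_rpow hp (f x - h x) (h x - g x)
          simpa using this
      _ = ENNReal.ofReal (2 ^ (p - 1)) *
            ∫⁻ x, (ENNReal.ofReal (|f x - h x| ^ p) + ENNReal.ofReal (|h x - g x| ^ p)) ∂ν := by
          rw [← lintegral_const_mul' _ _ ENNReal.ofReal_ne_top]
          congr 1
          funext x
          rw [ENNReal.ofReal_mul (by positivity),
            ENNReal.ofReal_add (by positivity) (by positivity)]
      _ = ENNReal.ofReal (2 ^ (p - 1)) *
            ((∫⁻ x, ENNReal.ofReal (|f x - h x| ^ p) ∂ν)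
              + ∫⁻ x, ENNReal.ofReal (|h x - g x| ^ p) ∂ν) := by
          rw [lintegral_add_left hmeas1]
      _ ≤ ENNReal.ofReal (2 ^ (p - 1)) *
            (ENNReal.ofReal ((σ + ε) ^ p) + ENNReal.ofReal (C₁⁻¹ * (2 ^ p * (σ + ε) ^ p))) :=
          mul_le_mul_right (add_le_add I1 I2) _
      _ = ENNReal.ofReal (K * (σ + ε) ^ p) := by
          rw [← ENNReal.ofReal_add (by positivity) (by positivity),
            ← ENNReal.ofReal_mul (by positivity)]
          congr 1
          rw [hKdef]
          ring
  -- pass to the limit ε → 0⁺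
  have hlim : ∫⁻ x, ENNReal.ofReal (|f x - g x| ^ p) ∂ν ≤ ENNReal.ofReal (K * σ ^ p) := by
    have hcont : Filter.Tendsto (fun ε : ℝ => ENNReal.ofReal (K * (σ + ε) ^ p))
        (nhdsWithin 0 (Set.Ioi 0)) (nhds (ENNReal.ofReal (K * σ ^ p))) := by
      apply ENNReal.tendsto_ofReal
      apply Filter.Tendsto.const_mul
      have h1 : Filter.Tendsto (fun ε : ℝ => σ + ε) (nhdsWithin 0 (Set.Ioi 0)) (nhds σ) := by
        have : Filter.Tendsto (fun ε : ℝ => σ + ε) (nhds 0) (nhds (σ + 0)) :=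
          (continuous_const.add continuous_id).tendsto 0
        simpa using this.mono_left nhdsWithin_le_nhds
      have h2 : ContinuousAt (fun x : ℝ => x ^ p) σ :=
        Real.continuousAt_rpow_const σ p (Or.inr hp0.le)
      exact h2.tendsto.comp h1
    apply ge_of_tendsto hcont
    filter_upwards [self_mem_nhdsWithin] with ε hε
    exact key ε hε
  refine hlim.trans (ENNReal.ofReal_le_ofReal ?_)
  -- final constant comparison: K * σ^p ≤ (C_p * σ)^p
  set A : ℝ := (1 + C₁⁻¹) ^ (1 / p) with hAdef
  set x : ℝ := (2:ℝ) ^ (1 / p) with hxdef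
  have hA1 : 1 ≤ A := Real.one_le_rpow (by nlinarith [inv_pos.mpr hC₁]) (by positivity)
  have hx1 : 1 ≤ x := Real.one_le_rpow one_le_two (by positivity)
  have hCp : 2 + 4 * B ≤ x * (1 + 2 * A) + x * B * (2 + 2 * A) := by
    nlinarith [mul_nonneg hB0 (sub_nonneg.mpr hA1), mul_nonneg (sub_nonneg.mpr hx1) (sub_nonneg.mpr hA1), mul_nonneg (mul_nonneg (sub_nonneg.mpr hx1) hB0) (by linarith : (0:ℝ) ≤ A), mul_nonneg (sub_nonneg.mpr hx1) hB0]
  have hCp0 : 0 ≤ x * (1 + 2 * A) + x * B * (2 + 2 * A) := by nlinarith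
  have hBp : B ^ p = C₁⁻¹ := by
    rw [hBdef, ← Real.rpow_mul hC₁.le, show -(1 / p) * p = -1 by field_simp,
      Real.rpow_neg_one]
  have hKle : K ≤ (2 + 4 * B) ^ p := by
    have h1 : (2:ℝ) ^ p + (4 * B) ^ p ≤ (2 + 4 * B) ^ p := by
      exact aux_rpow_add hp (by norm_num : (0:ℝ) ≤ 2) (by positivity : (0:ℝ) ≤ 4 * B)
    have h4B : (4 * B) ^ p = 4 ^ p * C₁⁻¹ := by
      rw [Real.mul_rpow (by norm_num) hB0, hBp]
    have h2 : K ≤ (2:ℝ) ^ p + 4 ^ p * C₁⁻¹ := by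
      rw [hKdef]
      have ha : (2:ℝ) ^ (p - 1) ≤ 2 ^ p :=
        Real.rpow_le_rpow_of_exponent_le one_le_two (by linarith)
      have hb : (2:ℝ) ^ (p - 1) * 2 ^ p ≤ 4 ^ p := by
        rw [← Real.rpow_add (by norm_num : (0:ℝ) < 2)]
        have h4 : (4:ℝ) ^ p = 2 ^ (2 * p) := by
          rw [show (4:ℝ) = 2 ^ (2:ℝ) by norm_num [Real.rpow_natCast], ← Real.rpow_mul (by norm_num)]
        rw [h4]
        exact Real.rpow_le_rpow_of_exponent_le one_le_two (by linarith)
      have hC₁inv : (0:ℝ) ≤ C₁⁻¹ := by positivity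
      nlinarith [Real.rpow_nonneg (by norm_num : (0:ℝ) ≤ 2) (p - 1), Real.rpow_nonneg (by norm_num : (0:ℝ) ≤ 2) p]
    rw [← h4B] at h2
    exact h2.trans h1
  calc K * σ ^ p ≤ (2 + 4 * B) ^ p * σ ^ p := by
        apply mul_le_mul_of_nonneg_right hKle (Real.rpow_nonneg hσ0 p)
    _ ≤ (x * (1 + 2 * A) + x * B * (2 + 2 * A)) ^ p * σ ^ p := by
        apply mul_le_mul_of_nonneg_right _ (Real.rpow_nonneg hσ0 p)
        exact Real.rpow_le_rpow (by positivity) hCp hp0.le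
    _ = ((x * (1 + 2 * A) + x * B * (2 + 2 * A)) * σ) ^ p := by
        rw [← Real.mul_rpow hCp0 hσ0]
end

section
/- Let T_α denote the soft-thresholding operator T_α(x)_i = sign(x_i)(|x_i| - α)_+ and consider the iteration x^{(0)} = 0, x^{(k+1)} = T_{θ^{(k)}}(x^{(k)} + A^⊤(y - A x^{(k)})) where y = A x* + ε, A has ℓ₂-normalized columns with mutual coherence μ, ‖x*‖₀ ≤ s with support S, and the threshold satisfies θ^{(k)} ≥ μ·‖x^{(k)} - x*‖₁ + C_A‖ε‖₁ with C_A = max_{ij}|A_{ij}|. Then by induction, supp x^{(k)} ⊆ S for every k ≥ 0. -/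
open Finset
open scoped Classical

/-- Soft-thresholding operator `T_α(v) = sign(v)(|v| - α)_+`. -/
noncomputable def softT (α v : ℝ) : ℝ := Real.sign v * max (|v| - α) 0

/-- In the thresholded iteration
`x^{(k+1)} = T_{θ^{(k)}}(x^{(k)} + Aᵀ(y - A x^{(k)}))` with `y = A x* + ε`,
coherence bound `μ`, entry bound `C_A`, and thresholds
`θ^{(k)} ≥ μ‖x^{(k)} - x*‖₁ + C_A‖ε‖₁`, the support of every iterate is contained
in the support of `x*`. -/
theorem stmt12 {m N : ℕ} (A : Matrix (Fin m) (Fin N) ℝ)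
    (hnorm : ∀ j : Fin N, ∑ t, (A t j) ^ 2 = 1)
    (μ CA : ℝ)
    (hμ : ∀ i j : Fin N, i ≠ j → |∑ t, A t i * A t j| ≤ μ)
    (hCA : ∀ t j, |A t j| ≤ CA)
    (s : ℕ) (xstar : Fin N → ℝ)
    (hsp : (Finset.univ.filter fun i => xstar i ≠ 0).card ≤ s)
    (ε : Fin m → ℝ) (y : Fin m → ℝ)
    (hy : ∀ t, y t = (∑ j, A t j * xstar j) + ε t)
    (θ : ℕ → ℝ) (x : ℕ → Fin N → ℝ)
    (hx0 : x 0 = 0)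
    (hθ : ∀ k, μ * (∑ i, |x k i - xstar i|) + CA * (∑ t, |ε t|) ≤ θ k)
    (hrec : ∀ k i, x (k + 1) i =
      softT (θ k) (x k i + ∑ t, A t i * (y t - ∑ j, A t j * x k j))) :
    ∀ k i, x k i ≠ 0 → xstar i ≠ 0 := by

  have H : ∀ k i, xstar i = 0 → x k i = 0 := by
    intro k
    induction k with
    | zero => intro i _; simp [hx0]
    | succ k ih =>
      intro i hi
      rw [hrec]
      have hxki : x k i = 0 := ih i hi
      set v := x k i + ∑ t, A t i * (y t - ∑ j, A t j * x k j) with hv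
      have key : v = (∑ j ∈ Finset.univ.erase i,
          (∑ t, A t i * A t j) * (xstar j - x k j)) + ∑ t, A t i * ε t := by
        have h1 : ∀ t, y t - ∑ j, A t j * x k j
            = (∑ j, A t j * (xstar j - x k j)) + ε t := by
          intro t
          rw [hy t]
          simp only [mul_sub, Finset.sum_sub_distrib]
          ring
        have h2 : ∑ t, A t i * (y t - ∑ j, A t j * x k j)
            = (∑ j, (∑ t, A t i * A t j) * (xstar j - x k j)) + ∑ t, A t i * ε t := by
          simp only [h1, mul_add]
          rw [Finset.sum_add_distrib]
          congr 1
          have e : ∀ t, A t i * ∑ j, A t j * (xstar j - x k j)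
              = ∑ j, A t i * A t j * (xstar j - x k j) := by
            intro t
            rw [Finset.mul_sum]
            exact Finset.sum_congr rfl fun j _ => by ring
          simp only [e]
          rw [Finset.sum_comm]
          exact Finset.sum_congr rfl fun j _ => (Finset.sum_mul _ _ _).symm
        have h3 : (∑ j, (∑ t, A t i * A t j) * (xstar j - x k j))
            = ∑ j ∈ Finset.univ.erase i, (∑ t, A t i * A t j) * (xstar j - x k j) := by
          exact (Finset.sum_erase _ (by rw [hi, hxki]; ring)).symm
        rw [hv, h2, h3, hxki, zero_add]
      have hbound : |v| ≤ θ k := by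
        have hμ0 : (∑ j ∈ Finset.univ.erase i, μ * |xstar j - x k j|)
            = μ * ∑ j, |x k j - xstar j| := by
          rw [Finset.mul_sum]
          have e1 : ∀ j, μ * |xstar j - x k j| = μ * |x k j - xstar j| := fun j => by
            rw [abs_sub_comm]
          simp only [e1]
          exact Finset.sum_erase _ (by rw [hi, hxki]; simp)
        calc |v| ≤ (∑ j ∈ Finset.univ.erase i,
              |(∑ t, A t i * A t j) * (xstar j - x k j)|) + |∑ t, A t i * ε t| := by
              rw [key]
              refine le_trans (abs_add_le _ _) ?_
              gcongr
              exact Finset.abs_sum_le_sum_abs _ _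
          _ ≤ (∑ j ∈ Finset.univ.erase i, μ * |xstar j - x k j|)
              + CA * ∑ t, |ε t| := by
              gcongr with j hj t ht
              · rw [abs_mul]
                exact mul_le_mul_of_nonneg_right
                  (hμ i j (fun h => (Finset.mem_erase.mp hj).1 h.symm)) (abs_nonneg _)
              · refine le_trans (Finset.abs_sum_le_sum_abs _ _) ?_
                rw [Finset.mul_sum]
                apply Finset.sum_le_sum
                intro t _
                rw [abs_mul]
                exact mul_le_mul_of_nonneg_right (hCA t i) (abs_nonneg _)
          _ = μ * (∑ j, |x k j - xstar j|) + CA * ∑ t, |ε t| := by rw [hμ0]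
          _ ≤ θ k := hθ k
      unfold softT
      have : max (|v| - θ k) 0 = 0 := max_eq_right (by linarith)
      rw [this, mul_zero]
  intro k i hxk
  by_contra h
  exact hxk (H k i h)
end

section
/- In the thresholded iteration x^{(k+1)} = T_{θ^{(k)}}(x^{(k)} + A^⊤(y - Ax^{(k)})) for y = Ax* + ε with ‖x*‖₀ ≤ s, ‖x*‖_∞ ≤ B, ‖ε‖₁ ≤ δ, A column-normalized with coherence μ, C_A ≤ 1, and thresholds θ^{(k)} chosen as the supremum of μ‖x^{(k)} − x*‖₁ + C_A δ over the admissible (x*, ε), the worst-case ℓ₁ error satisfies the recursion sup ‖x^{(k+1)} − x*‖₁ ≤ (2μs − μ)·sup ‖x^{(k)} − x*‖₁ + 2sC_A δ, and hence for all k, sup ‖x^{(k)} − x*‖₁ ≤ (2μs − μ)^k · sB + 2sδ ∑_{i=0}^{k-1} (2μs − μ)^i. -/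
open Finset
open scoped Classical

lemma softT_close' (α v : ℝ) (hα : 0 ≤ α) : |softT α v - v| ≤ α := by
  unfold softT
  rcases lt_trichotomy v 0 with h|h|h
  · rw [Real.sign_of_neg h, abs_of_neg h]
    rcases max_cases (-v - α) 0 with ⟨h1,h2⟩|⟨h1,h2⟩ <;> rw [h1, abs_le] <;> constructor <;> linarith
  · simp [h, hα]
  · rw [Real.sign_of_pos h, abs_of_pos h]
    rcases max_cases (v - α) 0 with ⟨h1,h2⟩|⟨h1,h2⟩ <;> rw [h1, abs_le] <;> constructor <;> linarith

lemma softT_zero' (α v : ℝ) (h : |v| ≤ α) : softT α v = 0 := by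
  unfold softT
  rw [max_eq_right (by linarith), mul_zero]

/-- Worst-case ℓ₁ error recursion and geometric bound for iterative soft
thresholding: with worst-case error `E k` over admissible `(x*, ε)` and thresholds
`θ k = μ E k + C_A δ`, one has
`E(k+1) ≤ (2μs - μ) E k + 2 s C_A δ` and
`E k ≤ (2μs - μ)^k s B + 2 s δ ∑_{i<k} (2μs - μ)^i`. -/
theorem stmt13 {m N : ℕ} (A : Matrix (Fin m) (Fin N) ℝ)
    (hnorm : ∀ j : Fin N, ∑ t, (A t j) ^ 2 = 1)
    (μ CA B δ : ℝ) (hμ0 : 0 ≤ μ) (hCA0 : 0 ≤ CA) (hCA1 : CA ≤ 1)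
    (hB : 0 ≤ B) (hδ : 0 ≤ δ)
    (hμ : ∀ i j : Fin N, i ≠ j → |∑ t, A t i * A t j| ≤ μ)
    (hCA : ∀ t j, |A t j| ≤ CA)
    (s : ℕ) (hs : 1 ≤ s)
    (Adm : (Fin N → ℝ) → (Fin m → ℝ) → Prop)
    (hAdm : ∀ xs e, Adm xs e ↔
      ((Finset.univ.filter fun i => xs i ≠ 0).card ≤ s ∧
        (∀ i, |xs i| ≤ B) ∧ ∑ t, |e t| ≤ δ))
    (X : ℕ → (Fin N → ℝ) → (Fin m → ℝ) → Fin N → ℝ)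
    (E θ : ℕ → ℝ)
    (hE : ∀ k, E k = sSup {r : ℝ | ∃ xs e, Adm xs e ∧ r = ∑ i, |X k xs e i - xs i|})
    (hθ : ∀ k, θ k = μ * E k + CA * δ)
    (hX0 : ∀ xs e, X 0 xs e = 0)
    (hXrec : ∀ k xs e i, X (k + 1) xs e i =
      softT (θ k) (X k xs e i + ∑ t, A t i *
        ((∑ j, A t j * xs j) + e t - ∑ j, A t j * X k xs e j))) :
    (∀ k, E (k + 1) ≤ (2 * μ * s - μ) * E k + 2 * s * CA * δ) ∧
    (∀ k, E k ≤ (2 * μ * s - μ) ^ k * (s * B) +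
      2 * s * δ * ∑ i ∈ Finset.range k, (2 * μ * s - μ) ^ i) := by
  have hs1 : (1 : ℝ) ≤ (s : ℝ) := by exact_mod_cast hs
  have adm0 : Adm 0 0 := by
    rw [hAdm]
    refine ⟨by simp, fun i => by simpa using hB, by simpa using hδ⟩
  have hne : ∀ k, ({r : ℝ | ∃ xs e, Adm xs e ∧ r = ∑ i, |X k xs e i - xs i|}).Nonempty :=
    fun k => ⟨∑ i, |X k 0 0 i - (0 : Fin N → ℝ) i|, ⟨0, 0, adm0, rfl⟩⟩
  -- uniform bound for members of the sup-set at step 0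
  have bound0 : ∀ xs e, Adm xs e → ∑ i, |X 0 xs e i - xs i| ≤ (s : ℝ) * B := by
    intro xs e ha
    obtain ⟨hcard, hbB, _⟩ := (hAdm xs e).1 ha
    have : ∑ i, |X 0 xs e i - xs i| = ∑ i, |xs i| := by
      refine Finset.sum_congr rfl fun i _ => ?_
      rw [hX0, Pi.zero_apply, zero_sub, abs_neg]
    rw [this]
    have h1 : ∑ i, |xs i| = ∑ i ∈ Finset.univ.filter (fun i => xs i ≠ 0), |xs i| := by
      refine (Finset.sum_subset (Finset.filter_subset _ _) fun i _ hi => ?_).symm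
      simp only [Finset.mem_filter, Finset.mem_univ, true_and, not_not] at hi
      simp [hi]
    rw [h1]
    calc ∑ i ∈ Finset.univ.filter (fun i => xs i ≠ 0), |xs i|
        ≤ ∑ _i ∈ Finset.univ.filter (fun i => xs i ≠ 0), B :=
          Finset.sum_le_sum fun i _ => hbB i
      _ = (Finset.univ.filter (fun i => xs i ≠ 0)).card * B := by
          rw [Finset.sum_const, nsmul_eq_mul]
      _ ≤ (s : ℝ) * B := by
          apply mul_le_mul_of_nonneg_right _ hB
          exact_mod_cast hcard
  -- the key inductive step
  have step : ∀ k, (∀ xs e, Adm xs e → (∀ i, xs i = 0 → X k xs e i = 0) ∧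
      ∑ i, |X k xs e i - xs i| ≤ E k) →
      ∀ xs e, Adm xs e → (∀ i, xs i = 0 → X (k + 1) xs e i = 0) ∧
      ∑ i, |X (k + 1) xs e i - xs i| ≤ (2 * μ * s - μ) * E k + 2 * s * CA * δ := by
    intro k hk xs e ha
    obtain ⟨hcard, hbB, hbδ⟩ := (hAdm xs e).1 ha
    obtain ⟨hsupp, hsum⟩ := hk xs e ha
    have hEk0 : 0 ≤ E k := by
      refine le_trans ?_ (hk 0 0 adm0).2
      exact Finset.sum_nonneg fun i _ => abs_nonneg _
    set Z := ∑ i, |X k xs e i - xs i| with hZdef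
    have hZ0 : 0 ≤ Z := Finset.sum_nonneg fun i _ => abs_nonneg _
    have hθ0 : 0 ≤ θ k := by
      rw [hθ]
      have := mul_nonneg hμ0 hEk0
      have := mul_nonneg hCA0 hδ
      linarith
    set h : Fin N → ℝ := fun i =>
      (∑ j ∈ Finset.univ.erase i, (∑ t, A t i * A t j) * (xs j - X k xs e j)) +
        ∑ t, A t i * e t with hhdef
    -- the input to the threshold equals xs i + h i
    have hv : ∀ i, X k xs e i + ∑ t, A t i *
        ((∑ j, A t j * xs j) + e t - ∑ j, A t j * X k xs e j) = xs i + h i := by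
      intro i
      have h1 : ∀ t, A t i * ((∑ j, A t j * xs j) + e t - ∑ j, A t j * X k xs e j)
          = (∑ j, A t i * A t j * (xs j - X k xs e j)) + A t i * e t := by
        intro t
        have e1 : (∑ j, A t j * xs j) + e t - ∑ j, A t j * X k xs e j
            = (∑ j, (A t j * xs j - A t j * X k xs e j)) + e t := by
          rw [Finset.sum_sub_distrib]; ring
        rw [e1, mul_add, Finset.mul_sum]
        congr 1
        exact Finset.sum_congr rfl fun j _ => by ring
      have h2 : ∑ t, A t i * ((∑ j, A t j * xs j) + e t - ∑ j, A t j * X k xs e j)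
          = (∑ j, (∑ t, A t i * A t j) * (xs j - X k xs e j)) + ∑ t, A t i * e t := by
        rw [Finset.sum_congr rfl fun t _ => h1 t, Finset.sum_add_distrib]
        congr 1
        rw [Finset.sum_comm]
        exact Finset.sum_congr rfl fun j _ => by rw [Finset.sum_mul]
      rw [h2]
      have h3 : ∑ j, (∑ t, A t i * A t j) * (xs j - X k xs e j)
          = (∑ t, A t i * A t i) * (xs i - X k xs e i) +
            ∑ j ∈ Finset.univ.erase i, (∑ t, A t i * A t j) * (xs j - X k xs e j) := by
        rw [← Finset.add_sum_erase _ _ (Finset.mem_univ i)]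
      have h4 : (∑ t, A t i * A t i) = 1 := by
        rw [← hnorm i]
        exact Finset.sum_congr rfl fun t _ => (sq (A t i)).symm
      rw [h3, h4, hhdef]
      ring
    -- bound on |h i|
    have hhb : ∀ i, |h i| ≤ μ * (Z - |X k xs e i - xs i|) + CA * δ := by
      intro i
      have hb1 : |∑ j ∈ Finset.univ.erase i, (∑ t, A t i * A t j) * (xs j - X k xs e j)|
          ≤ μ * (Z - |X k xs e i - xs i|) := by
        calc |∑ j ∈ Finset.univ.erase i, (∑ t, A t i * A t j) * (xs j - X k xs e j)|
            ≤ ∑ j ∈ Finset.univ.erase i, |(∑ t, A t i * A t j) * (xs j - X k xs e j)| :=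
              Finset.abs_sum_le_sum_abs _ _
          _ ≤ ∑ j ∈ Finset.univ.erase i, μ * |X k xs e j - xs j| := by
              refine Finset.sum_le_sum fun j hj => ?_
              rw [abs_mul]
              have hji : i ≠ j := fun hij => (Finset.mem_erase.1 hj).1 hij.symm
              rw [abs_sub_comm (xs j)]
              exact mul_le_mul_of_nonneg_right (hμ i j hji) (abs_nonneg _) |>.trans
                (mul_le_mul_of_nonneg_right (le_refl μ) (abs_nonneg _))
          _ = μ * ∑ j ∈ Finset.univ.erase i, |X k xs e j - xs j| := by rw [Finset.mul_sum]
          _ = μ * (Z - |X k xs e i - xs i|) := by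
              congr 1
              have := Finset.add_sum_erase Finset.univ (fun j => |X k xs e j - xs j|)
                (Finset.mem_univ i)
              rw [hZdef]
              linarith [this]
      have hb2 : |∑ t, A t i * e t| ≤ CA * δ := by
        calc |∑ t, A t i * e t| ≤ ∑ t, |A t i * e t| := Finset.abs_sum_le_sum_abs _ _
          _ ≤ ∑ t, CA * |e t| := by
              refine Finset.sum_le_sum fun t _ => ?_
              rw [abs_mul]
              exact mul_le_mul_of_nonneg_right (hCA t i) (abs_nonneg _)
          _ = CA * ∑ t, |e t| := by rw [Finset.mul_sum]
          _ ≤ CA * δ := mul_le_mul_of_nonneg_left hbδ hCA0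
      calc |h i| ≤ |∑ j ∈ Finset.univ.erase i, (∑ t, A t i * A t j) * (xs j - X k xs e j)|
          + |∑ t, A t i * e t| := abs_add_le _ _
        _ ≤ μ * (Z - |X k xs e i - xs i|) + CA * δ := add_le_add hb1 hb2
    have hhθ : ∀ i, |h i| + μ * |X k xs e i - xs i| ≤ θ k := by
      intro i
      have h1 := hhb i
      have h2 : μ * Z ≤ μ * E k := mul_le_mul_of_nonneg_left hsum hμ0
      rw [hθ]
      nlinarith [mul_nonneg hμ0 (abs_nonneg (X k xs e i - xs i))]
    -- support property at step k+1
    have hsupp1 : ∀ i, xs i = 0 → X (k + 1) xs e i = 0 := by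
      intro i hi
      rw [hXrec, hv i]
      apply softT_zero'
      rw [hi, zero_add]
      have := hhθ i
      nlinarith [mul_nonneg hμ0 (abs_nonneg (X k xs e i - xs i))]
    refine ⟨hsupp1, ?_⟩
    -- the per-coordinate error bound on the support
    set S := Finset.univ.filter (fun i => xs i ≠ 0) with hSdef
    have hsum1 : ∑ i, |X (k + 1) xs e i - xs i| = ∑ i ∈ S, |X (k + 1) xs e i - xs i| := by
      refine (Finset.sum_subset (Finset.filter_subset _ _) fun i _ hi => ?_).symm
      simp only [hSdef, Finset.mem_filter, Finset.mem_univ, true_and, not_not] at hi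
      rw [hsupp1 i hi, hi, sub_zero, abs_zero]
    have hZS : ∑ i ∈ S, |X k xs e i - xs i| = Z := by
      refine Finset.sum_subset (Finset.filter_subset _ _) fun i _ hi => ?_
      simp only [hSdef, Finset.mem_filter, Finset.mem_univ, true_and, not_not] at hi
      rw [hsupp i hi, hi, sub_zero, abs_zero]
    have hper : ∀ i ∈ S, |X (k + 1) xs e i - xs i|
        ≤ θ k + μ * Z + CA * δ - μ * |X k xs e i - xs i| := by
      intro i _
      rw [hXrec, hv i]
      have h1 : |softT (θ k) (xs i + h i) - (xs i + h i)| ≤ θ k := softT_close' _ _ hθ0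
      have h2 : |softT (θ k) (xs i + h i) - xs i|
          ≤ |softT (θ k) (xs i + h i) - (xs i + h i)| + |h i| := by
        have := abs_sub_le (softT (θ k) (xs i + h i)) (xs i + h i) (xs i)
        have h3 : |xs i + h i - xs i| = |h i| := by congr 1; ring
        linarith [this, h3.le, h3.ge]
      have h4 := hhb i
      linarith
    rw [hsum1]
    calc ∑ i ∈ S, |X (k + 1) xs e i - xs i|
        ≤ ∑ i ∈ S, (θ k + μ * Z + CA * δ - μ * |X k xs e i - xs i|) :=
          Finset.sum_le_sum hper
      _ = S.card * (θ k + μ * Z + CA * δ) - μ * ∑ i ∈ S, |X k xs e i - xs i| := by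
          rw [Finset.sum_sub_distrib, Finset.sum_const, nsmul_eq_mul]
          congr 1
          exact (Finset.mul_sum _ _ _).symm
      _ = S.card * (θ k + μ * Z + CA * δ) - μ * Z := by rw [hZS]
      _ ≤ (s : ℝ) * (θ k + μ * Z + CA * δ) - μ * Z := by
          have hc : (S.card : ℝ) ≤ (s : ℝ) := by exact_mod_cast hcard
          have hbr : 0 ≤ θ k + μ * Z + CA * δ := by
            have := mul_nonneg hμ0 hZ0
            have := mul_nonneg hCA0 hδ
            linarith
          nlinarith
      _ ≤ (2 * μ * s - μ) * E k + 2 * s * CA * δ := by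
          rw [hθ]
          have h2 : μ * Z ≤ μ * E k := mul_le_mul_of_nonneg_left hsum hμ0
          nlinarith [mul_nonneg hμ0 hZ0]
  -- membership / sup facts
  have key : ∀ k, ∀ xs e, Adm xs e → (∀ i, xs i = 0 → X k xs e i = 0) ∧
      ∑ i, |X k xs e i - xs i| ≤ E k := by
    intro k
    induction k with
    | zero =>
      intro xs e ha
      refine ⟨fun i _ => by rw [hX0]; rfl, ?_⟩
      rw [hE 0]
      apply le_csSup
      · exact ⟨(s : ℝ) * B, fun r ⟨xs', e', ha', hr'⟩ => hr' ▸ bound0 xs' e' ha'⟩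
      · exact ⟨xs, e, ha, rfl⟩
    | succ k ih =>
      intro xs e ha
      obtain ⟨hs1', hs2'⟩ := step k ih xs e ha
      refine ⟨hs1', ?_⟩
      rw [hE (k + 1)]
      apply le_csSup
      · exact ⟨(2 * μ * s - μ) * E k + 2 * s * CA * δ,
          fun r ⟨xs', e', ha', hr'⟩ => hr' ▸ (step k ih xs' e' ha').2⟩
      · exact ⟨xs, e, ha, rfl⟩
  have part1 : ∀ k, E (k + 1) ≤ (2 * μ * s - μ) * E k + 2 * s * CA * δ := by
    intro k
    rw [hE (k + 1)]
    apply csSup_le (hne _)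
    rintro r ⟨xs, e, ha, hr⟩
    exact hr ▸ (step k (key k) xs e ha).2
  refine ⟨part1, ?_⟩
  intro k
  induction k with
  | zero =>
    rw [hE 0]
    simp only [pow_zero, one_mul, Finset.range_zero, Finset.sum_empty, mul_zero, add_zero]
    apply csSup_le (hne _)
    rintro r ⟨xs, e, ha, hr⟩
    exact hr ▸ bound0 xs e ha
  | succ k ih =>
    have hq : 0 ≤ 2 * μ * (s : ℝ) - μ := by nlinarith
    have hEk0 : 0 ≤ E k := by
      refine le_trans ?_ (key k 0 0 adm0).2
      exact Finset.sum_nonneg fun i _ => abs_nonneg _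
    have h1 := part1 k
    have h2 : (2 * μ * s - μ) * E k ≤ (2 * μ * s - μ) *
        ((2 * μ * s - μ) ^ k * (s * B) + 2 * s * δ * ∑ i ∈ Finset.range k, (2 * μ * s - μ) ^ i) :=
      mul_le_mul_of_nonneg_left ih hq
    have h3 : (2 : ℝ) * s * CA * δ ≤ 2 * s * δ := by
      nlinarith [mul_nonneg (mul_nonneg (by linarith : (0:ℝ) ≤ 2 * (s:ℝ))
        (by linarith : (0:ℝ) ≤ 1 - CA)) hδ]
    have h4 : ∑ i ∈ Finset.range (k + 1), (2 * μ * (s : ℝ) - μ) ^ i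
        = (2 * μ * s - μ) * ∑ i ∈ Finset.range k, (2 * μ * s - μ) ^ i + 1 := geom_sum_succ
    have h2' : (2 * μ * s - μ) * E k ≤ (2 * μ * s - μ) ^ (k + 1) * (s * B) +
        2 * s * δ * ((2 * μ * s - μ) * ∑ i ∈ Finset.range k, (2 * μ * s - μ) ^ i) := by
      refine h2.trans_eq ?_
      rw [pow_succ]; ring
    calc E (k + 1) ≤ (2 * μ * s - μ) * E k + 2 * s * CA * δ := h1
      _ ≤ (2 * μ * s - μ) ^ (k + 1) * (s * B) +
          2 * s * δ * ∑ i ∈ Finset.range (k + 1), (2 * μ * s - μ) ^ i := by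
        rw [h4]
        have hsd : (0:ℝ) ≤ 2 * s * δ := by positivity
        nlinarith [h2', h3]
end
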